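/- arXiv:1403.2079 — 5 statements merged into one kernel-verified Lean document; each statement's English description precedes it below -/
import Mathlib

section
/- Let a, b, c, d, σ² > 0 with B = a·d − b·c > 0 and A = σ²·(c − a). If P₂ > A/B (interpreting the bound as P₂ > 0 when A < 0), then for all P₁ > 0, (1 + a·P₁/(b·P₂ + σ²)) / (1 + c·P₁/(d·P₂ + σ²)) > 1, i.e., user 1 achieves a positive secrecy rate. -/
/-! Cross-multiplying, the eavesdropper's SINR `c P₁ / (d P₂ + σ²)` is below the legitimate
receiver's `a P₁ / (b P₂ + σ²)` exactly when `σ² (c - a) < (a d - b c) P₂`, which is what the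
threshold on `P₂` says; and `(1 + x) / (1 + y) > 1` as soon as `y < x` and `1 + y > 0`. -/

lemma lt_mul_of_div_lt_or_neg {A B P : ℝ} (hB : 0 < B) (hP : 0 ≤ P)
    (h : A / B < P ∨ (A < 0 ∧ 0 < P)) : A < B * P := by
  rcases h with hdiv | ⟨hA, -⟩
  · rwa [div_lt_iff₀ hB, mul_comm] at hdiv
  · exact hA.trans_le (mul_nonneg hB.le hP)

lemma div_lt_div_of_sub_mul_lt {a b c d σ2 P1 P2 : ℝ} (hP1 : 0 < P1)
    (hbd : 0 < b * P2 + σ2) (hdd : 0 < d * P2 + σ2)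
    (h : σ2 * (c - a) < (a * d - b * c) * P2) :
    c * P1 / (d * P2 + σ2) < a * P1 / (b * P2 + σ2) := by
  have hcross : c * (b * P2 + σ2) < a * (d * P2 + σ2) := by linear_combination h
  rw [div_lt_div_iff₀ hdd hbd]
  linear_combination P1 * hcross

theorem positive_secrecy_above_threshold_general (a b c d σ2 P2 : ℝ)
    (hb : 0 < b) (hc : 0 < c) (hd : 0 < d) (hσ : 0 < σ2)
    (hB : 0 < a * d - b * c)
    (hP2 : σ2 * (c - a) / (a * d - b * c) < P2 ∨ (σ2 * (c - a) < 0 ∧ 0 < P2))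
    (hP2nn : 0 ≤ P2) :
    ∀ P1 : ℝ, 0 < P1 →
      (1 + a * P1 / (b * P2 + σ2)) / (1 + c * P1 / (d * P2 + σ2)) > 1 := by
  intro P1 hP1
  have hsinr : c * P1 / (d * P2 + σ2) < a * P1 / (b * P2 + σ2) :=
    div_lt_div_of_sub_mul_lt hP1 (by positivity) (by positivity)
      (lt_mul_of_div_lt_or_neg hB hP2nn hP2)
  have hden : 0 < 1 + c * P1 / (d * P2 + σ2) := by positivity
  exact (one_lt_div hden).2 (by linarith)

/-- with B = ad − bc > 0 and P₂ above the threshold A/B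
(interpreted as P₂ > 0 when A < 0), user 1 achieves a positive secrecy rate
for every P₁ > 0. -/
theorem positive_secrecy_above_threshold (a b c d σ2 P2 : ℝ)
    (ha : 0 < a) (hb : 0 < b) (hc : 0 < c) (hd : 0 < d) (hσ : 0 < σ2)
    (hB : 0 < a * d - b * c)
    (hP2 : σ2 * (c - a) / (a * d - b * c) < P2 ∨ (σ2 * (c - a) < 0 ∧ 0 < P2))
    (hP2nn : 0 ≤ P2) :
    ∀ P1 : ℝ, 0 < P1 →
      (1 + a * P1 / (b * P2 + σ2)) / (1 + c * P1 / (d * P2 + σ2)) > 1 :=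
  positive_secrecy_above_threshold_general a b c d σ2 P2 hb hc hd hσ hB hP2 hP2nn
end

section
/- Let a, b, c, d, σ² > 0 with B = a·d − b·c < 0 and A = σ²·(c − a) < 0. If 0 < P₂ < A/B, then for all P₁ > 0, (1 + a·P₁/(b·P₂ + σ²)) / (1 + c·P₁/(d·P₂ + σ²)) > 1, i.e., a positive secrecy rate is achieved; and if P₂ > A/B the ratio is strictly less than 1. -/
/-!
Clearing the positive denominators, the ratio
`(1 + a P₁ / (b P₂ + σ²)) / (1 + c P₁ / (d P₂ + σ²))` exceeds `1` exactly when
`c (b P₂ + σ²) < a (d P₂ + σ²)`, i.e. when `σ² (c - a) < P₂ (a d - b c)`, whatever `P₁ > 0` is.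
Since `a d - b c < 0`, dividing by it flips this into `P₂ < σ² (c - a) / (a d - b c)`.
-/

section SignalRatio

variable {a c s t P : ℝ}

lemma mul_div_lt_mul_div_iff (hP : 0 < P) (hs : 0 < s) (ht : 0 < t) :
    c * P / t < a * P / s ↔ c * s < a * t := by
  rw [div_lt_div_iff₀ ht hs, mul_right_comm c, mul_right_comm a, mul_lt_mul_iff_left₀ hP]

lemma one_lt_one_add_div_div_one_add_div_iff (hP : 0 < P) (hc : 0 ≤ c) (hs : 0 < s)
    (ht : 0 < t) : 1 < (1 + a * P / s) / (1 + c * P / t) ↔ c * s < a * t := by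
  rw [one_lt_div (by positivity), add_lt_add_iff_left, mul_div_lt_mul_div_iff hP hs ht]

lemma one_add_div_div_one_add_div_lt_one_iff (hP : 0 < P) (hc : 0 ≤ c) (hs : 0 < s)
    (ht : 0 < t) : (1 + a * P / s) / (1 + c * P / t) < 1 ↔ a * t < c * s := by
  rw [div_lt_one (by positivity), add_lt_add_iff_left, mul_div_lt_mul_div_iff hP ht hs]

end SignalRatio

section Threshold

variable {a b c d σ2 P : ℝ}

lemma mul_add_lt_mul_add_iff_lt_div (hB : a * d - b * c < 0) :
    c * (b * P + σ2) < a * (d * P + σ2) ↔ P < σ2 * (c - a) / (a * d - b * c) := by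
  rw [lt_div_iff_of_neg hB]
  constructor <;> intro h <;> linarith

lemma mul_add_lt_mul_add_iff_div_lt (hB : a * d - b * c < 0) :
    a * (d * P + σ2) < c * (b * P + σ2) ↔ σ2 * (c - a) / (a * d - b * c) < P := by
  rw [div_lt_iff_of_neg hB]
  constructor <;> intro h <;> linarith

end Threshold

theorem secrecy_rate_both_negative_case_general (a b c d σ2 : ℝ)
    (hb : 0 < b) (hc : 0 < c) (hd : 0 < d) (hσ : 0 < σ2)
    (hB : a * d - b * c < 0) (hA : σ2 * (c - a) < 0) :
    (∀ P2 : ℝ, 0 < P2 → P2 < σ2 * (c - a) / (a * d - b * c) →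
      ∀ P1 : ℝ, 0 < P1 →
        (1 + a * P1 / (b * P2 + σ2)) / (1 + c * P1 / (d * P2 + σ2)) > 1) ∧
    (∀ P2 : ℝ, σ2 * (c - a) / (a * d - b * c) < P2 →
      ∀ P1 : ℝ, 0 < P1 →
        (1 + a * P1 / (b * P2 + σ2)) / (1 + c * P1 / (d * P2 + σ2)) < 1) := by
  constructor
  · intro P2 hP2 hlt P1 hP1
    rw [gt_iff_lt, one_lt_one_add_div_div_one_add_div_iff hP1 hc.le (by positivity)
      (by positivity)]
    exact (mul_add_lt_mul_add_iff_lt_div hB).2 hlt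
  · intro P2 hlt P1 hP1
    have hP2 : 0 < P2 := (div_pos_of_neg_of_neg hA hB).trans hlt
    rw [one_add_div_div_one_add_div_lt_one_iff hP1 hc.le (by positivity) (by positivity)]
    exact (mul_add_lt_mul_add_iff_div_lt hB).2 hlt

/-- with B = ad − bc < 0 and A = σ²(c−a) < 0, the secrecy rate is
positive iff 0 < P₂ < A/B, and negative when P₂ > A/B. -/
theorem secrecy_rate_both_negative_case (a b c d σ2 : ℝ)
    (ha : 0 < a) (hb : 0 < b) (hc : 0 < c) (hd : 0 < d) (hσ : 0 < σ2)
    (hB : a * d - b * c < 0) (hA : σ2 * (c - a) < 0) :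
    (∀ P2 : ℝ, 0 < P2 → P2 < σ2 * (c - a) / (a * d - b * c) →
      ∀ P1 : ℝ, 0 < P1 →
        (1 + a * P1 / (b * P2 + σ2)) / (1 + c * P1 / (d * P2 + σ2)) > 1) ∧
    (∀ P2 : ℝ, σ2 * (c - a) / (a * d - b * c) < P2 →
      ∀ P1 : ℝ, 0 < P1 →
        (1 + a * P1 / (b * P2 + σ2)) / (1 + c * P1 / (d * P2 + σ2)) < 1) :=
  secrecy_rate_both_negative_case_general a b c d σ2 hb hc hd hσ hB hA
end

section
/- Let a, b, c, d, σ² > 0 with C := b − d and D := b·(c + σ²) − d·(a + σ²) satisfying C·D < 0, and suppose E := b·c − a·d > 0. Then the quadratic N(P₂) = b·d·E·P₂² + 2·b·d·(c−a)·σ²·P₂ + σ²·(c·d·σ² − a·(b·(c+σ²) − c·d)) is strictly positive for all real P₂; hence g(P₂) = (1 + a/(bP₂+σ²))/(1 + c/(dP₂+σ²)) is strictly increasing on [0,∞), and on any compact feasibility interval [α, β] ⊆ [0,∞) its maximum is attained at the right endpoint β. -/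
/-! The quadratic `N` is the numerator of `g'`: up to the positive factor
`((b x + σ²) (d x + σ² + c))²` it is the derivative of `g`. Its leading coefficient `b d E` is
positive and its discriminant is `4 a b c d σ² C D < 0`, so `N > 0` everywhere; hence `g` is
strictly increasing on `[0, ∞)` and attains its maximum over `[α, β]` at `β`. -/

open Set

theorem quadratic_pos_of_discrim_neg {K : Type*} [Field K] [LinearOrder K] [IsStrictOrderedRing K]
    {a b c : K} (ha : 0 < a) (h : discrim a b c < 0) (x : K) : 0 < a * (x * x) + b * x + c := by
  have hsq : 4 * a * (a * (x * x) + b * x + c) = (2 * a * x + b) ^ 2 - discrim a b c := by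
    rw [discrim]; ring
  have : 0 < 4 * a * (a * (x * x) + b * x + c) := by
    rw [hsq]; linarith [sq_nonneg (2 * a * x + b)]
  exact pos_of_mul_pos_right this (by positivity)

section SecrecyGain

variable (a b c d σ2 : ℝ)

noncomputable def secrecyGain (x : ℝ) : ℝ := (1 + a / (b * x + σ2)) / (1 + c / (d * x + σ2))

def secrecyGainDerivNum (x : ℝ) : ℝ :=
  b * d * (b * c - a * d) * x ^ 2 + 2 * b * d * (c - a) * σ2 * x +
    σ2 * (c * d * σ2 - a * (b * (c + σ2) - c * d))

theorem discrim_secrecyGainDerivNum :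
    discrim (b * d * (b * c - a * d)) (2 * b * d * (c - a) * σ2)
        (σ2 * (c * d * σ2 - a * (b * (c + σ2) - c * d))) =
      4 * a * b * c * d * σ2 * ((b - d) * (b * (c + σ2) - d * (a + σ2))) := by
  rw [discrim]; ring

variable {a b c d σ2}

theorem secrecyGainDerivNum_pos (ha : 0 < a) (hb : 0 < b) (hc : 0 < c) (hd : 0 < d)
    (hσ : 0 < σ2) (hCD : (b - d) * (b * (c + σ2) - d * (a + σ2)) < 0)
    (hE : 0 < b * c - a * d) (x : ℝ) : 0 < secrecyGainDerivNum a b c d σ2 x := by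
  have hdisc := discrim_secrecyGainDerivNum a b c d σ2 ▸
    mul_neg_of_pos_of_neg (by positivity : 0 < 4 * a * b * c * d * σ2) hCD
  have := quadratic_pos_of_discrim_neg (by positivity) hdisc x
  rw [secrecyGainDerivNum, sq]
  exact this

theorem hasDerivAt_secrecyGain {x : ℝ} (hbx : b * x + σ2 ≠ 0) (hdx : d * x + σ2 ≠ 0)
    (hdxc : d * x + σ2 + c ≠ 0) :
    HasDerivAt (secrecyGain a b c d σ2)
      (secrecyGainDerivNum a b c d σ2 x / ((b * x + σ2) * (d * x + σ2 + c)) ^ 2) x := by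
  have hlin : ∀ k : ℝ, HasDerivAt (fun y => k * y + σ2) k x := fun k => by
    simpa using ((hasDerivAt_id x).const_mul k).add_const σ2
  have h1 := ((hasDerivAt_const x a).fun_div (hlin b) hbx).const_add 1
  have h2 := ((hasDerivAt_const x c).fun_div (hlin d) hdx).const_add 1
  have h2ne : 1 + c / (d * x + σ2) ≠ 0 := by
    rw [one_add_div hdx]; exact div_ne_zero hdxc hdx
  refine (h1.fun_div h2 h2ne).congr_deriv ?_
  simp only [secrecyGainDerivNum, one_add_div hbx, one_add_div hdx]
  rw [div_eq_div_iff (by positivity) (by positivity)]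
  field_simp
  ring

theorem strictMonoOn_secrecyGain (hb : 0 ≤ b) (hc : 0 < c) (hd : 0 ≤ d) (hσ : 0 < σ2)
    (hN : ∀ x, 0 < x → 0 < secrecyGainDerivNum a b c d σ2 x) :
    StrictMonoOn (secrecyGain a b c d σ2) (Ici 0) := by
  have hderiv : ∀ x ∈ Ici (0 : ℝ), HasDerivAt (secrecyGain a b c d σ2)
      (secrecyGainDerivNum a b c d σ2 x / ((b * x + σ2) * (d * x + σ2 + c)) ^ 2) x := by
    intro x (hx : 0 ≤ x)
    exact hasDerivAt_secrecyGain (by positivity) (by positivity) (by positivity)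
  refine strictMonoOn_of_hasDerivWithinAt_pos (convex_Ici 0)
    (fun x hx => (hderiv x hx).continuousAt.continuousWithinAt)
    (fun x hx => (hderiv x (interior_subset hx)).hasDerivWithinAt) fun x hx => ?_
  rw [interior_Ici, mem_Ioi] at hx
  exact div_pos (hN x hx) (by positivity)

end SecrecyGain

/-- if C·D < 0 and E = bc − ad > 0 then N > 0 everywhere, g is
strictly increasing on [0,∞), and on any compact feasibility interval the
maximum is at the right endpoint. -/
theorem g_strict_mono_case (a b c d σ2 : ℝ)
    (ha : 0 < a) (hb : 0 < b) (hc : 0 < c) (hd : 0 < d) (hσ : 0 < σ2)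
    (hCD : (b - d) * (b * (c + σ2) - d * (a + σ2)) < 0)
    (hE : 0 < b * c - a * d) :
    (∀ x : ℝ, 0 <
      b * d * (b * c - a * d) * x ^ 2 + 2 * b * d * (c - a) * σ2 * x +
        σ2 * (c * d * σ2 - a * (b * (c + σ2) - c * d))) ∧
    StrictMonoOn (fun x : ℝ => (1 + a / (b * x + σ2)) / (1 + c / (d * x + σ2)))
      (Set.Ici 0) ∧
    (∀ α β : ℝ, 0 ≤ α → α ≤ β →
      ∀ x ∈ Set.Icc α β,
        (1 + a / (b * x + σ2)) / (1 + c / (d * x + σ2)) ≤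
          (1 + a / (b * β + σ2)) / (1 + c / (d * β + σ2))) := by
  have hN := secrecyGainDerivNum_pos ha hb hc hd hσ hCD hE
  have hmono := strictMonoOn_secrecyGain hb.le hc hd.le hσ fun x _ => hN x
  exact ⟨hN, hmono, fun α β hα hαβ x hx =>
    hmono.monotoneOn (hα.trans hx.1) (hα.trans hαβ) hx.2⟩
end

section
/- In the egoistic scenario, the equality QoS constraint P₂·f/(P₁·g + σ²) = γ uniquely determines P₂ = γ·(P₁·g + σ²)/f, and substituting this into the secrecy-rate objective gives that user 1's secrecy rate is positive if and only if P₁·a·(b·e − c·d) > ((1+c)·d − b·(1+e))·σ², where a = g = |h_{U1,D2}|², b = |h_{U1,D1}|², c = γ·|h_{U2,D1}|²/f, d = |h_{U1,E}|², e = γ·|h_{U2,E}|²/f, and f = |h_{U2,D2}|². -/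
/-! Since the logarithm is increasing, the secrecy rate is positive exactly when the
SINR at `D₁` exceeds the SINR at the eavesdropper. Both interference-plus-noise terms
are positive, so cross-multiplying turns this into the sign of a polynomial that is
`P₁` times the stated one. -/

theorem mul_div_eq_iff_eq_mul_div {K : Type*} [Field K] {x f s γ : K}
    (hf : f ≠ 0) (hs : s ≠ 0) : x * f / s = γ ↔ x = γ * s / f := by
  rw [div_eq_iff hs, eq_div_iff hf]

theorem one_lt_one_add_div_one_add_div_iff {K : Type*} [Field K] [LinearOrder K]
    [IsStrictOrderedRing K] {x y A B : K} (hA : 0 < A) (hB : 0 < B) (hy : 0 ≤ y) :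
    1 < (1 + x / A) / (1 + y / B) ↔ y * A < x * B := by
  have hden : 0 < 1 + y / B := by positivity
  rw [one_lt_div hden, add_lt_add_iff_left, div_lt_div_iff₀ hB hA]

theorem egoistic_cross_difference_eq (P1 g b c d e σ2 : ℝ) :
    P1 * b * (e * (P1 * g + σ2) + σ2) - P1 * d * (c * (P1 * g + σ2) + σ2) =
      P1 * (P1 * g * (b * e - c * d) - ((1 + c) * d - b * (1 + e)) * σ2) := by
  ring

theorem egoistic_positivity_iff_general (g b c d e f γ σ2 P1 : ℝ)
    (hg : 0 < g) (hc : 0 < c) (hd : 0 < d) (he : 0 < e)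
    (hf : 0 < f) (hσ : 0 < σ2) (hP1 : 0 < P1) :
    (∀ P2 : ℝ, P2 * f / (P1 * g + σ2) = γ ↔ P2 = γ * (P1 * g + σ2) / f) ∧
    ((1 + P1 * b / (c * (P1 * g + σ2) + σ2)) /
        (1 + P1 * d / (e * (P1 * g + σ2) + σ2)) > 1 ↔
      P1 * g * (b * e - c * d) > ((1 + c) * d - b * (1 + e)) * σ2) := by
  have hS : 0 < P1 * g + σ2 := by positivity
  refine ⟨fun P2 => mul_div_eq_iff_eq_mul_div hf.ne' hS.ne', ?_⟩
  rw [gt_iff_lt, one_lt_one_add_div_one_add_div_iff (by positivity) (by positivity)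
      (by positivity), ← sub_pos, egoistic_cross_difference_eq, mul_pos_iff_of_pos_left hP1,
    sub_pos, gt_iff_lt]

/-- egoistic scenario: the equality QoS constraint determines P₂
uniquely, and positivity of user 1's secrecy rate after substitution is
equivalent to the stated polynomial inequality in P₁. -/
theorem egoistic_positivity_iff (g b c d e f γ σ2 P1 : ℝ)
    (hg : 0 < g) (hb : 0 < b) (hc : 0 < c) (hd : 0 < d) (he : 0 < e)
    (hf : 0 < f) (hγ : 0 < γ) (hσ : 0 < σ2) (hP1 : 0 < P1) :
    (∀ P2 : ℝ, P2 * f / (P1 * g + σ2) = γ ↔ P2 = γ * (P1 * g + σ2) / f) ∧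
    ((1 + P1 * b / (c * (P1 * g + σ2) + σ2)) /
        (1 + P1 * d / (e * (P1 * g + σ2) + σ2)) > 1 ↔
      P1 * g * (b * e - c * d) > ((1 + c) * d - b * (1 + e)) * σ2) :=
  egoistic_positivity_iff_general g b c d e f γ σ2 P1 hg hc hd he hf hσ hP1
end

section
/- Let A' = ((1+c)·d − b·(1+e))·σ² and B' = a·(b·e − c·d) with a, b, c, d, e, σ² > 0. If A' > 0 and B' < 0, then no P₁ > 0 achieves a positive secrecy rate in the egoistic scenario, i.e., (1 + P₁·b/(c·(P₁·a + σ²) + σ²)) / (1 + P₁·d/(e·(P₁·a + σ²) + σ²)) ≤ 1 for all P₁ > 0. -/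
/-! Write `x = P₁a + σ²`. Cross-multiplying the two SINRs,
`P₁d(cx + σ²) - P₁b(ex + σ²) = P₁(A' - P₁B')`, which is positive when `A' > 0` and `B' < 0`;
so the eavesdropper's SINR dominates the legitimate one and the ratio is at most `1`. -/

lemma one_add_div_one_add_le_one {u v : ℝ} (hv : 0 ≤ v) (huv : u ≤ v) :
    (1 + u) / (1 + v) ≤ 1 :=
  (div_le_one (by linarith)).2 (by linarith)

lemma egoistic_sinr_cross_difference (a b c d e σ2 P1 : ℝ) :
    P1 * d * (c * (P1 * a + σ2) + σ2) - P1 * b * (e * (P1 * a + σ2) + σ2) =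
      P1 * (((1 + c) * d - b * (1 + e)) * σ2 - P1 * (a * (b * e - c * d))) := by
  ring

theorem egoistic_no_positive_secrecy_general (a b c d e σ2 : ℝ)
    (ha : 0 < a) (hc : 0 < c) (hd : 0 < d) (he : 0 < e)
    (hσ : 0 < σ2)
    (hA' : 0 < ((1 + c) * d - b * (1 + e)) * σ2)
    (hB' : a * (b * e - c * d) < 0) :
    ∀ P1 : ℝ, 0 < P1 →
      (1 + P1 * b / (c * (P1 * a + σ2) + σ2)) /
        (1 + P1 * d / (e * (P1 * a + σ2) + σ2)) ≤ 1 := by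
  intro P1 hP1
  have hcross : 0 ≤ P1 * (((1 + c) * d - b * (1 + e)) * σ2 - P1 * (a * (b * e - c * d))) :=
    mul_nonneg hP1.le (by linarith [mul_neg_of_pos_of_neg hP1 hB'])
  have hsinr : P1 * b / (c * (P1 * a + σ2) + σ2) ≤ P1 * d / (e * (P1 * a + σ2) + σ2) := by
    rw [div_le_div_iff₀ (by positivity) (by positivity)]
    linarith [egoistic_sinr_cross_difference a b c d e σ2 P1]
  exact one_add_div_one_add_le_one (by positivity) hsinr

/-- egoistic scenario: if A' > 0 and B' < 0 then no P₁ > 0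
achieves a positive secrecy rate. -/
theorem egoistic_no_positive_secrecy (a b c d e σ2 : ℝ)
    (ha : 0 < a) (hb : 0 < b) (hc : 0 < c) (hd : 0 < d) (he : 0 < e)
    (hσ : 0 < σ2)
    (hA' : 0 < ((1 + c) * d - b * (1 + e)) * σ2)
    (hB' : a * (b * e - c * d) < 0) :
    ∀ P1 : ℝ, 0 < P1 →
      (1 + P1 * b / (c * (P1 * a + σ2) + σ2)) /
        (1 + P1 * d / (e * (P1 * a + σ2) + σ2)) ≤ 1 :=
  egoistic_no_positive_secrecy_general a b c d e σ2 ha hc hd he hσ hA' hB'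
end
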